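/- (Irrationality of the cross term A₁ in the CHSH argument.) Let a and b be rational numbers with |a| < 1 and |b| < 1, and let φ be a real number with φ/(2π) rational, φ not an integer multiple of π/6 and not an integer multiple of π/4. Then the real number √(1−a²)·√(1−b²)·cos φ is irrational. -/
import Mathlib

open Polynomial

lemma dickson_monic_deg : ∀ n : ℕ, (dickson 1 (1:ℤ) (n+1)).Monic ∧
    (dickson 1 (1:ℤ) (n+1)).degree = ((n+1 : ℕ) : WithBot ℕ)
  | 0 => ⟨monic_X, degree_X⟩
  | 1 => by
    have h2 : dickson 1 (1:ℤ) 2 = X^2 - C 2 := by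
      rw [dickson_two]; norm_num
    have hd : degree (C (2:ℤ)) < degree ((X:ℤ[X])^2) := by
      rw [degree_C (by norm_num), degree_X_pow]; exact_mod_cast Nat.zero_lt_two
    constructor
    · rw [h2]; exact (monic_X_pow 2).sub_of_left hd
    · rw [h2, degree_sub_eq_left_of_degree_lt hd, degree_X_pow]
  | (n+2) => by
    obtain ⟨m1, d1⟩ := dickson_monic_deg n
    obtain ⟨m2, d2⟩ := dickson_monic_deg (n+1)
    have hXd : (X * dickson 1 (1:ℤ) (n+2)).Monic := monic_X.mul m2
    have hdeg : degree (X * dickson 1 (1:ℤ) (n+2)) = ((n+3 : ℕ) : WithBot ℕ) := by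
      rw [degree_mul, degree_X, d2]
      norm_cast
      omega
    have hlt : degree (C (1:ℤ) * dickson 1 (1:ℤ) (n+1)) < degree (X * dickson 1 (1:ℤ) (n+2)) := by
      rw [hdeg, C_1, one_mul, d1]
      exact_mod_cast by omega
    have e : dickson 1 (1:ℤ) (n+3) = X * dickson 1 (1:ℤ) (n+2) - C 1 * dickson 1 (1:ℤ) (n+1) :=
      dickson_add_two 1 1 (n+1)
    constructor
    · rw [e]; exact hXd.sub_of_left hlt
    · rw [e, degree_sub_eq_left_of_degree_lt hlt, hdeg]

lemma dickson_eval_two_cos (θ : ℝ) (n : ℕ) :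
    (Polynomial.aeval ((2:ℂ) * Complex.cos θ)) (dickson 1 (1:ℤ) n)
      = 2 * Complex.cos (n * θ) := by
  have hxy : Complex.exp (θ * Complex.I) * Complex.exp (-(θ * Complex.I)) = 1 := by
    rw [← Complex.exp_add, add_neg_cancel, Complex.exp_zero]
  have key := dickson_one_one_eval_add_inv (Complex.exp (θ * Complex.I))
    (Complex.exp (-(θ * Complex.I))) hxy n
  have h2c : (2:ℂ) * Complex.cos θ
      = Complex.exp (θ * Complex.I) + Complex.exp (-(θ * Complex.I)) := by
    rw [Complex.two_cos, neg_mul]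
  have h2cn : (2:ℂ) * Complex.cos (n * θ)
      = Complex.exp (θ * Complex.I) ^ n + Complex.exp (-(θ * Complex.I)) ^ n := by
    rw [Complex.two_cos, ← Complex.exp_nat_mul, ← Complex.exp_nat_mul]
    ring_nf
  rw [aeval_def, eval₂_eq_eval_map, map_dickson]
  simp only [map_one]
  rw [h2c, key, h2cn]

/-- Irrationality of the cross term `A₁` in the CHSH argument: for rational `a`, `b`
with `|a| < 1`, `|b| < 1`, and `φ` a rational multiple of `2π` that is not an integer
multiple of `π/6` nor of `π/4`, the number `√(1-a²)·√(1-b²)·cos φ` is irrational. -/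
theorem irrational_cross_term (a b : ℚ) (ha : |a| < 1) (hb : |b| < 1) (φ : ℝ)
    (hφ : φ / (2 * Real.pi) ∈ Set.range ((↑) : ℚ → ℝ))
    (h6 : ¬ ∃ k : ℤ, φ = k * (Real.pi / 6))
    (h4 : ¬ ∃ k : ℤ, φ = k * (Real.pi / 4)) :
    Irrational (Real.sqrt (1 - (a : ℝ) ^ 2) * Real.sqrt (1 - (b : ℝ) ^ 2) * Real.cos φ) := by
  have ha2 : (a:ℚ)^2 < 1 := by nlinarith [abs_nonneg a, sq_abs a]
  have hb2 : (b:ℚ)^2 < 1 := by nlinarith [abs_nonneg b, sq_abs b]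
  set q : ℚ := (1 - a^2) * (1 - b^2) with hqdef
  have hq0 : 0 < q := by nlinarith [ha2, hb2]
  rintro ⟨r, hr⟩
  have hs : (Real.sqrt (1-(a:ℝ)^2) * Real.sqrt (1-(b:ℝ)^2))^2 = (q:ℝ) := by
    rw [mul_pow, Real.sq_sqrt (by exact_mod_cast (by linarith : (0:ℚ) ≤ 1 - a^2)),
      Real.sq_sqrt (by exact_mod_cast (by linarith : (0:ℚ) ≤ 1 - b^2)), hqdef]
    push_cast; ring
  have hr2 : (r:ℝ)^2 = (q:ℝ) * Real.cos φ ^ 2 := by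
    rw [← hs, ← mul_pow, ← hr]
  set y : ℚ := 4 * r^2 / q - 2 with hydef
  have hy : (y:ℝ) = 2 * Real.cos (2*φ) := by
    have hqne : (q:ℝ) ≠ 0 := by exact_mod_cast hq0.ne'
    rw [hydef, Real.cos_two_mul]
    push_cast
    field_simp
    linear_combination (4:ℝ) * hr2
  obtain ⟨t, ht⟩ := hφ
  have hpi : (2 * Real.pi) ≠ 0 := by positivity
  have hφt : φ = (t:ℝ) * (2 * Real.pi) := by
    rw [eq_div_iff hpi] at ht; exact ht.symm
  set u : ℚ := 2 * t with hudef
  set N : ℕ := u.den with hNdef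
  have hN1 : 1 ≤ N := Rat.den_pos u
  have hcosN : Real.cos (N * (2*φ)) = 1 := by
    have h1 : ((u.den : ℚ)) * u = (u.num : ℚ) := Rat.den_mul_eq_num u
    have h2 : ((u.den : ℝ)) * ((u : ℝ)) = ((u.num : ℝ)) := by
      exact_mod_cast congrArg (fun z : ℚ => (z : ℝ)) h1
    have key : (N:ℝ) * (2*φ) = (u.num : ℝ) * (2 * Real.pi) := by
      rw [hφt, hNdef]
      push_cast [hudef] at h2 ⊢
      linear_combination (2 * Real.pi) * h2
    rw [key]
    exact Real.cos_int_mul_two_pi u.num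
  -- integrality
  set P : ℤ[X] := dickson 1 (1:ℤ) N - C 2 with hPdef
  obtain ⟨Pm, Pd⟩ := dickson_monic_deg (N - 1)
  rw [Nat.sub_add_cancel hN1] at Pm Pd
  have hdegC : degree (C (2:ℤ)) < degree (dickson 1 (1:ℤ) N) := by
    rw [Pd, degree_C (by norm_num)]
    exact_mod_cast by omega
  have Pmonic : P.Monic := Pm.sub_of_left hdegC
  have hevalC : (Polynomial.aeval ((y:ℂ))) P = 0 := by
    have hyC : ((y:ℝ) : ℂ) = 2 * Complex.cos ((2*φ : ℝ) : ℂ) := by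
      rw [hy]; push_cast [Complex.ofReal_cos]; ring
    have := dickson_eval_two_cos (2*φ) N
    rw [hPdef, map_sub, aeval_C]
    have hyy : ((y:ℚ):ℂ) = (2:ℂ) * Complex.cos ((2*φ:ℝ):ℂ) := by
      rw [← hyC]; norm_cast
    rw [hyy, this]
    have : Complex.cos ((N:ℂ) * ((2*φ:ℝ):ℂ)) = 1 := by
      have : ((N:ℝ) * (2*φ) : ℝ) = ((N:ℂ) * ((2*φ:ℝ):ℂ)).re := by push_cast; simp
      rw [show ((N:ℂ) * ((2*φ:ℝ):ℂ)) = (((N:ℝ) * (2*φ) : ℝ) : ℂ) by push_cast; ring,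
        ← Complex.ofReal_cos, hcosN, Complex.ofReal_one]
    rw [this]
    simp
  have hevalQ : (Polynomial.aeval y) P = 0 := by
    have : ((Polynomial.aeval y) P : ℚ) = 0 := by
      have h := hevalC
      rw [show ((y:ℚ):ℂ) = algebraMap ℚ ℂ y from rfl, aeval_algebraMap_apply] at h
      exact_mod_cast (map_eq_zero_iff (algebraMap ℚ ℂ) (RingHom.injective _)).mp h
    exact this
  have hint : IsIntegral ℤ y := ⟨P, Pmonic, by rwa [← aeval_def]⟩
  obtain ⟨m, hm⟩ := IsIntegrallyClosed.isIntegral_iff.mp hint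
  have hmy : (m:ℝ) = 2 * Real.cos (2*φ) := by
    rw [← hy]; exact_mod_cast congrArg (fun z : ℚ => (z:ℝ)) hm
  have hb1 : -2 ≤ m ∧ m ≤ 2 := by
    have h1 := Real.neg_one_le_cos (2*φ)
    have h2 := Real.cos_le_one (2*φ)
    constructor <;> [exact_mod_cast (by nlinarith : (-2:ℝ) ≤ m); exact_mod_cast (by nlinarith : (m:ℝ) ≤ 2)]
  obtain ⟨hbl, hbr⟩ := hb1
  interval_cases m
  · -- cos 2φ = -1 = cos π
    have : Real.cos (2*φ) = Real.cos Real.pi := by rw [Real.cos_pi]; push_cast at hmy; linarith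
    obtain ⟨k, hk | hk⟩ := Real.cos_eq_cos_iff.mp this
    · exact h4 ⟨2 - 4*k, by push_cast; linarith⟩
    · exact h4 ⟨4*k - 2, by push_cast; linarith⟩
  · -- cos 2φ = -1/2 = cos (2π/3)
    have hc : Real.cos (2*Real.pi/3) = -(1/2) := by
      rw [show (2*Real.pi/3) = Real.pi - Real.pi/3 by ring, Real.cos_pi_sub, Real.cos_pi_div_three]
    have : Real.cos (2*φ) = Real.cos (2*Real.pi/3) := by rw [hc]; push_cast at hmy; linarith
    obtain ⟨k, hk | hk⟩ := Real.cos_eq_cos_iff.mp this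
    · exact h6 ⟨2 - 6*k, by push_cast; linarith⟩
    · exact h6 ⟨6*k - 2, by push_cast; linarith⟩
  · -- cos 2φ = 0 = cos (π/2)
    have : Real.cos (2*φ) = Real.cos (Real.pi/2) := by
      rw [Real.cos_pi_div_two]; push_cast at hmy; linarith
    obtain ⟨k, hk | hk⟩ := Real.cos_eq_cos_iff.mp this
    · exact h4 ⟨1 - 4*k, by push_cast; linarith⟩
    · exact h4 ⟨4*k - 1, by push_cast; linarith⟩
  · -- cos 2φ = 1/2 = cos (π/3)
    have : Real.cos (2*φ) = Real.cos (Real.pi/3) := by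
      rw [Real.cos_pi_div_three]; push_cast at hmy; linarith
    obtain ⟨k, hk | hk⟩ := Real.cos_eq_cos_iff.mp this
    · exact h6 ⟨1 - 6*k, by push_cast; linarith⟩
    · exact h6 ⟨6*k - 1, by push_cast; linarith⟩
  · -- cos 2φ = 1 = cos 0
    have : Real.cos (2*φ) = Real.cos 0 := by rw [Real.cos_zero]; push_cast at hmy; linarith
    obtain ⟨k, hk | hk⟩ := Real.cos_eq_cos_iff.mp this
    · exact h4 ⟨-4*k, by push_cast; linarith⟩
    · exact h4 ⟨4*k, by push_cast; linarith⟩
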